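/- arXiv:1003.1584 — 4 statements merged into one kernel-verified Lean document; each statement's English description precedes it below -/
import Mathlib

section
/- For 0 < α < 1/2 and λ ≥ 1, ∫₀ᵗ e^{-λ(t-u)} ((t-u)^{-2α} + u^{-α}) du ≤ C_α λ^{2α-1}, where C_α = 1/(1-2α) + 4. -/
open Real Set intervalIntegral
open MeasureTheory

lemma aux_rpow_le_exp (β y : ℝ) (hβ0 : 0 ≤ β) (hβ1 : β ≤ 1) (hy : 0 ≤ y) :
    y ^ β ≤ Real.exp y := by
  rcases le_or_gt y 1 with h | h
  · calc y ^ β ≤ 1 := Real.rpow_le_one hy h hβ0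
      _ ≤ Real.exp y := Real.one_le_exp hy
  · calc y ^ β ≤ y ^ (1:ℝ) := Real.rpow_le_rpow_of_exponent_le h.le hβ1
      _ = y := Real.rpow_one y
      _ ≤ Real.exp y := by linarith [Real.add_one_le_exp y]

lemma aux_key1 (β lam x : ℝ) (hβ0 : 0 ≤ β) (hβ1 : β ≤ 1) (hlam : 0 < lam) (hx : 0 ≤ x) :
    Real.exp (-lam * x) * x ^ β ≤ lam ^ (-β) := by
  have h1 : (lam * x) ^ β ≤ Real.exp (lam * x) :=
    aux_rpow_le_exp β _ hβ0 hβ1 (by positivity)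
  have h2 : Real.exp (-lam * x) * ((lam * x) ^ β) ≤ 1 := by
    rw [neg_mul, Real.exp_neg]
    rw [inv_mul_le_iff₀ (Real.exp_pos _)]
    linarith
  have hx' : x ^ β = (lam * x) ^ β * lam ^ (-β) := by
    rw [Real.mul_rpow hlam.le hx, Real.rpow_neg hlam.le, mul_comm (lam ^ β),
      mul_assoc, mul_inv_cancel₀ (ne_of_gt (Real.rpow_pos_of_pos hlam β)), mul_one]
  calc Real.exp (-lam * x) * x ^ β
      = Real.exp (-lam * x) * (lam * x) ^ β * lam ^ (-β) := by rw [hx', ← mul_assoc]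
    _ ≤ 1 * lam ^ (-β) := by
        apply mul_le_mul_of_nonneg_right h2 (Real.rpow_nonneg hlam.le _)
    _ = lam ^ (-β) := one_mul _

lemma aux_exp_int (lam a b : ℝ) (hlam : lam ≠ 0) :
    ∫ x in a..b, Real.exp (-lam * x)
      = (Real.exp (-lam * a) - Real.exp (-lam * b)) / lam := by
  have h := intervalIntegral.integral_comp_mul_left (a := a) (b := b)
    (fun y => Real.exp y) (c := -lam) (neg_ne_zero.mpr hlam)
  simp only [integral_exp, smul_eq_mul] at h
  rw [h, inv_neg, div_eq_mul_inv]
  ring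

lemma aux_exp_int_le_inv (lam a b : ℝ) (hlam : 0 < lam) (ha : 0 ≤ a) (hab : a ≤ b) :
    ∫ x in a..b, Real.exp (-lam * x) ≤ 1 / lam := by
  rw [aux_exp_int lam a b (ne_of_gt hlam)]
  have h1 : Real.exp (-lam * a) - Real.exp (-lam * b) ≤ 1 := by
    have hb := Real.exp_pos (-lam * b)
    have ha1 : Real.exp (-lam * a) ≤ 1 := Real.exp_le_one_iff.mpr (by nlinarith)
    linarith
  exact (div_le_div_iff_of_pos_right hlam).mpr h1

lemma aux_exp_int_le_len (lam a b : ℝ) (hlam : 0 ≤ lam) (ha : 0 ≤ a) (hab : a ≤ b) :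
    ∫ x in a..b, Real.exp (-lam * x) ≤ b - a := by
  have : ∫ x in a..b, (1:ℝ) = b - a := by simp
  rw [← this]
  apply intervalIntegral.integral_mono_on hab ?_ ?_ ?_
  · exact (Real.continuous_exp.comp (continuous_const.mul continuous_id)).intervalIntegrable a b
  · exact intervalIntegrable_const
  · intro x hx
    rw [← Real.exp_zero]
    apply Real.exp_le_exp.mpr
    have := hx.1
    nlinarith

theorem stmt_2 (α lam T t : ℝ) (hα0 : 0 < α) (hα1 : α < 1/2) (hlam : 1 ≤ lam)
    (hT : 0 < T) (ht : t ∈ Icc (0:ℝ) T) :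
    ∫ u in (0:ℝ)..t, Real.exp (-lam * (t - u)) * ((t - u) ^ (-(2*α)) + u ^ (-α))
      ≤ (1 / (1 - 2*α) + 4) * lam ^ (2*α - 1) := by
  have hlam0 : 0 < lam := lt_of_lt_of_le one_pos hlam
  have h2α : (-1:ℝ) < -(2*α) := by linarith
  have hα' : (-1:ℝ) < -α := by linarith
  have hpow_pos : 0 < lam ^ (2*α - 1) := Real.rpow_pos_of_pos hlam0 _
  have h12 : (0:ℝ) < 1/(1-2*α) := by
    apply div_pos one_pos; linarith
  rcases eq_or_lt_of_le ht.1 with h0 | h0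
  · rw [← h0, intervalIntegral.integral_same]
    nlinarith [mul_pos (by linarith : (0:ℝ) < 1/(1-2*α) + 4) hpow_pos]
  -- 0 < t
  have hievalc : Continuous fun s : ℝ => Real.exp (-lam * s) :=
    Real.continuous_exp.comp (continuous_const.mul continuous_id)
  have hint1 : ∀ a b : ℝ, IntervalIntegrable (fun s => Real.exp (-lam * s) * s ^ (-(2*α))) volume a b :=
    fun a b => (intervalIntegrable_rpow' h2α).continuousOn_mul hievalc.continuousOn
  have hcont2 : Continuous fun u : ℝ => Real.exp (-lam * (t - u)) :=
    Real.continuous_exp.comp (continuous_const.mul (continuous_const.sub continuous_id))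
  have hint1' : ∀ a b : ℝ, IntervalIntegrable
      (fun u => Real.exp (-lam * (t - u)) * (t - u) ^ (-(2*α))) volume a b := by
    intro a b
    have h := (hint1 (t - a) (t - b)).comp_sub_left t
    simpa using h
  have hint2 : ∀ a b : ℝ, IntervalIntegrable
      (fun u => Real.exp (-lam * (t - u)) * u ^ (-α)) volume a b :=
    fun a b => (intervalIntegrable_rpow' hα').continuousOn_mul hcont2.continuousOn
  have hpow_eq : ∀ β : ℝ, (1/lam) ^ β = lam ^ (-β) := by
    intro β
    rw [one_div, Real.inv_rpow hlam0.le, ← Real.rpow_neg hlam0.le]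
  have hsplit : (∫ u in (0:ℝ)..t, Real.exp (-lam * (t - u)) * ((t - u) ^ (-(2*α)) + u ^ (-α)))
      = (∫ u in (0:ℝ)..t, Real.exp (-lam * (t - u)) * (t - u) ^ (-(2*α)))
        + ∫ u in (0:ℝ)..t, Real.exp (-lam * (t - u)) * u ^ (-α) := by
    rw [← intervalIntegral.integral_add (hint1' 0 t) (hint2 0 t)]
    congr 1
    ext u
    ring
  -- the A part
  have hA : (∫ u in (0:ℝ)..t, Real.exp (-lam * (t - u)) * (t - u) ^ (-(2*α)))
      = ∫ s in (0:ℝ)..t, Real.exp (-lam * s) * s ^ (-(2*α)) := by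
    have h := intervalIntegral.integral_comp_sub_left (a := 0) (b := t)
      (fun s => Real.exp (-lam * s) * s ^ (-(2*α))) t
    simpa using h
  have hApiece : ∀ c : ℝ, 0 ≤ c → c ≤ 1/lam →
      (∫ s in (0:ℝ)..c, Real.exp (-lam * s) * s ^ (-(2*α))) ≤ lam ^ (2*α-1) / (1-2*α) := by
    intro c hc0 hc1
    have step1 : (∫ s in (0:ℝ)..c, Real.exp (-lam * s) * s ^ (-(2*α)))
        ≤ ∫ s in (0:ℝ)..c, s ^ (-(2*α)) := by
      apply intervalIntegral.integral_mono_on hc0 (hint1 0 c) (intervalIntegrable_rpow' h2α)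
      intro x hx
      have h1 : Real.exp (-lam * x) ≤ 1 := Real.exp_le_one_iff.mpr (by nlinarith [hx.1])
      have h2 : (0:ℝ) ≤ x ^ (-(2*α)) := Real.rpow_nonneg hx.1 _
      nlinarith
    have step2 : (∫ s in (0:ℝ)..c, s ^ (-(2*α))) = c ^ (-(2*α)+1) / (-(2*α)+1) := by
      rw [integral_rpow (Or.inl h2α), Real.zero_rpow (by linarith), sub_zero]
    have step3 : c ^ (-(2*α)+1) ≤ (1/lam) ^ (-(2*α)+1) :=
      Real.rpow_le_rpow hc0 hc1 (by linarith)
    have step4 : (1/lam) ^ (-(2*α)+1) = lam ^ (2*α-1) := by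
      rw [hpow_eq]; congr 1; ring
    calc (∫ s in (0:ℝ)..c, Real.exp (-lam * s) * s ^ (-(2*α)))
        ≤ c ^ (-(2*α)+1) / (-(2*α)+1) := step1.trans step2.le
      _ ≤ lam ^ (2*α-1) / (1-2*α) := by
          have h5 := step3.trans step4.le
          rw [(by ring : -(2*α)+1 = 1-2*α)] at h5 ⊢
          exact (div_le_div_iff_of_pos_right (by linarith)).mpr h5
  have hAbound : (∫ s in (0:ℝ)..t, Real.exp (-lam * s) * s ^ (-(2*α)))
      ≤ lam ^ (2*α-1) / (1-2*α) + lam ^ (2*α-1) := by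
    rcases le_or_gt t (1/lam) with hcase | hcase
    · exact (hApiece t h0.le hcase).trans (by linarith)
    · have hinvlam : (0:ℝ) < 1/lam := by positivity
      rw [← intervalIntegral.integral_add_adjacent_intervals (hint1 0 (1/lam)) (hint1 (1/lam) t)]
      have hp1 := hApiece (1/lam) hinvlam.le le_rfl
      have hp2 : (∫ s in (1/lam)..t, Real.exp (-lam * s) * s ^ (-(2*α))) ≤ lam ^ (2*α-1) := by
        have hmono : (∫ s in (1/lam)..t, Real.exp (-lam * s) * s ^ (-(2*α)))
            ≤ ∫ s in (1/lam)..t, Real.exp (-lam * s) * lam ^ (2*α) := by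
          apply intervalIntegral.integral_mono_on hcase.le (hint1 _ _)
            ((hievalc.intervalIntegrable _ _).mul_const _)
          intro x hx
          have hxpos : 0 < x := lt_of_lt_of_le hinvlam hx.1
          have hb : x ^ (-(2*α)) ≤ (1/lam) ^ (-(2*α)) :=
            Real.rpow_le_rpow_of_nonpos hinvlam hx.1 (by linarith)
          rw [hpow_eq, neg_neg] at hb
          exact mul_le_mul_of_nonneg_left hb (Real.exp_nonneg _)
        have heq : (∫ s in (1/lam)..t, Real.exp (-lam * s) * lam ^ (2*α))
            = (∫ s in (1/lam)..t, Real.exp (-lam * s)) * lam ^ (2*α) :=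
          intervalIntegral.integral_mul_const _ _
        have hexp := aux_exp_int_le_inv lam (1/lam) t hlam0 hinvlam.le hcase.le
        have hfin : (∫ s in (1/lam)..t, Real.exp (-lam * s)) * lam ^ (2*α)
            ≤ (1/lam) * lam ^ (2*α) := by
          apply mul_le_mul_of_nonneg_right ?_ (Real.rpow_nonneg hlam0.le _)
          simpa [one_div] using hexp
        have hid : (1/lam) * lam ^ (2*α) = lam ^ (2*α-1) := by
          rw [Real.rpow_sub hlam0, Real.rpow_one]
          ring
        calc (∫ s in (1/lam)..t, Real.exp (-lam * s) * s ^ (-(2*α)))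
            ≤ (∫ s in (1/lam)..t, Real.exp (-lam * s)) * lam ^ (2*α) := hmono.trans heq.le
          _ ≤ (1/lam) * lam ^ (2*α) := hfin
          _ = lam ^ (2*α-1) := hid
      linarith
  have ht2 : (0:ℝ) < t/2 := by linarith
  have hpow_ineq : lam ^ (α-1) ≤ lam ^ (2*α-1) :=
    Real.rpow_le_rpow_of_exponent_le hlam (by linarith)
  have hpow_a1 : 0 ≤ lam ^ (α-1) := Real.rpow_nonneg hlam0.le _
  have hB1 : (∫ u in (0:ℝ)..(t/2), Real.exp (-lam * (t - u)) * u ^ (-α))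
      ≤ 2 * lam ^ (2*α-1) := by
    have hmono : (∫ u in (0:ℝ)..(t/2), Real.exp (-lam * (t - u)) * u ^ (-α))
        ≤ ∫ u in (0:ℝ)..(t/2), Real.exp (-lam * (t/2)) * u ^ (-α) := by
      apply intervalIntegral.integral_mono_on ht2.le (hint2 _ _)
        ((intervalIntegrable_rpow' hα').const_mul _)
      intro x hx
      have he : Real.exp (-lam * (t - x)) ≤ Real.exp (-lam * (t/2)) :=
        Real.exp_le_exp.mpr (by nlinarith [hx.2])
      exact mul_le_mul_of_nonneg_right he (Real.rpow_nonneg hx.1 _)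
    have hval : (∫ u in (0:ℝ)..(t/2), u ^ (-α)) = (t/2) ^ (-α+1) / (-α+1) := by
      rw [integral_rpow (Or.inl hα'), Real.zero_rpow (by linarith), sub_zero]
    have heq : (∫ u in (0:ℝ)..(t/2), Real.exp (-lam * (t/2)) * u ^ (-α))
        = Real.exp (-lam * (t/2)) * ((t/2) ^ (-α+1) / (-α+1)) := by
      rw [intervalIntegral.integral_const_mul, hval]
    have hkey := aux_key1 (-α+1) lam (t/2) (by linarith) (by linarith) hlam0 ht2.le
    have hlameq : lam ^ (-(-α+1)) = lam ^ (α-1) := by congr 1; ring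
    rw [hlameq] at hkey
    calc (∫ u in (0:ℝ)..(t/2), Real.exp (-lam * (t - u)) * u ^ (-α))
        ≤ Real.exp (-lam * (t/2)) * ((t/2) ^ (-α+1) / (-α+1)) := hmono.trans heq.le
      _ = (Real.exp (-lam * (t/2)) * (t/2) ^ (-α+1)) / (-α+1) := by ring
      _ ≤ lam ^ (α-1) / (-α+1) := by
          exact (div_le_div_iff_of_pos_right (by linarith)).mpr hkey
      _ ≤ 2 * lam ^ (2*α-1) := by
          rw [div_le_iff₀ (by linarith : (0:ℝ) < -α+1)]
          nlinarith
  have hB2 : (∫ u in (t/2)..t, Real.exp (-lam * (t - u)) * u ^ (-α))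
      ≤ lam ^ (2*α-1) := by
    have hmono : (∫ u in (t/2)..t, Real.exp (-lam * (t - u)) * u ^ (-α))
        ≤ ∫ u in (t/2)..t, Real.exp (-lam * (t - u)) * (t/2) ^ (-α) := by
      apply intervalIntegral.integral_mono_on (by linarith) (hint2 _ _)
        ((hcont2.intervalIntegrable _ _).mul_const _)
      intro x hx
      have hb : x ^ (-α) ≤ (t/2) ^ (-α) :=
        Real.rpow_le_rpow_of_nonpos ht2 hx.1 (by linarith)
      exact mul_le_mul_of_nonneg_left hb (Real.exp_nonneg _)
    have heq : (∫ u in (t/2)..t, Real.exp (-lam * (t - u)) * (t/2) ^ (-α))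
        = (∫ u in (t/2)..t, Real.exp (-lam * (t - u))) * (t/2) ^ (-α) :=
      intervalIntegral.integral_mul_const _ _
    have hsub : (∫ u in (t/2)..t, Real.exp (-lam * (t - u)))
        = ∫ s in (0:ℝ)..(t/2), Real.exp (-lam * s) := by
      have h := intervalIntegral.integral_comp_sub_left (a := t/2) (b := t)
        (fun s => Real.exp (-lam * s)) t
      rw [h, sub_self, (by ring : t - t/2 = t/2)]
    have hfin : (∫ s in (0:ℝ)..(t/2), Real.exp (-lam * s)) * (t/2) ^ (-α)
        ≤ lam ^ (α-1) := by
      rcases le_or_gt (t/2) (1/lam) with hc | hc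
      · have hlen := aux_exp_int_le_len lam 0 (t/2) hlam0.le le_rfl ht2.le
        rw [sub_zero] at hlen
        have hexp_nn : 0 ≤ (∫ s in (0:ℝ)..(t/2), Real.exp (-lam * s)) := by
          apply intervalIntegral.integral_nonneg ht2.le
          intro x _; exact Real.exp_nonneg _
        have h1 : (∫ s in (0:ℝ)..(t/2), Real.exp (-lam * s)) * (t/2) ^ (-α)
            ≤ (t/2) * (t/2) ^ (-α) :=
          mul_le_mul_of_nonneg_right hlen (Real.rpow_nonneg ht2.le _)
        have h2 : (t/2) * (t/2) ^ (-α) = (t/2) ^ (1+-α) := by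
          rw [Real.rpow_add ht2, Real.rpow_one]
        have h3 : (t/2) ^ (1+-α) ≤ (1/lam) ^ (1+-α) :=
          Real.rpow_le_rpow ht2.le hc (by linarith)
        have h4 : (1/lam) ^ (1+-α) = lam ^ (α-1) := by
          rw [hpow_eq]; congr 1; ring
        calc (∫ s in (0:ℝ)..(t/2), Real.exp (-lam * s)) * (t/2) ^ (-α)
            ≤ (t/2) ^ (1+-α) := h1.trans h2.le
          _ ≤ lam ^ (α-1) := h3.trans h4.le
      · have hexp := aux_exp_int_le_inv lam 0 (t/2) hlam0 le_rfl ht2.le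
        have hinvlam : (0:ℝ) < 1/lam := by positivity
        have hb : (t/2) ^ (-α) ≤ (1/lam) ^ (-α) :=
          Real.rpow_le_rpow_of_nonpos hinvlam hc.le (by linarith)
        have h1 : (∫ s in (0:ℝ)..(t/2), Real.exp (-lam * s)) * (t/2) ^ (-α)
            ≤ (1/lam) * (1/lam) ^ (-α) := by
          apply mul_le_mul hexp hb (Real.rpow_nonneg ht2.le _) hinvlam.le
        have h2 : (1/lam) * (1/lam) ^ (-α) = (1/lam) ^ (1+-α) := by
          rw [Real.rpow_add hinvlam, Real.rpow_one]
        have h4 : (1/lam) ^ (1+-α) = lam ^ (α-1) := by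
          rw [hpow_eq]; congr 1; ring
        calc (∫ s in (0:ℝ)..(t/2), Real.exp (-lam * s)) * (t/2) ^ (-α)
            ≤ (1/lam) ^ (1+-α) := h1.trans h2.le
          _ = lam ^ (α-1) := h4
    calc (∫ u in (t/2)..t, Real.exp (-lam * (t - u)) * u ^ (-α))
        ≤ (∫ s in (0:ℝ)..(t/2), Real.exp (-lam * s)) * (t/2) ^ (-α) := by
          rw [← hsub]; exact hmono.trans heq.le
      _ ≤ lam ^ (α-1) := hfin
      _ ≤ lam ^ (2*α-1) := hpow_ineq
  have hBsplit : (∫ u in (0:ℝ)..t, Real.exp (-lam * (t - u)) * u ^ (-α))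
      = (∫ u in (0:ℝ)..(t/2), Real.exp (-lam * (t - u)) * u ^ (-α))
        + ∫ u in (t/2)..t, Real.exp (-lam * (t - u)) * u ^ (-α) :=
    (intervalIntegral.integral_add_adjacent_intervals (hint2 0 (t/2)) (hint2 (t/2) t)).symm
  have hdiv : lam ^ (2*α-1) / (1-2*α) = 1/(1-2*α) * lam ^ (2*α-1) := by ring
  rw [hsplit, hA, hBsplit]
  rw [hdiv] at hAbound
  linarith
end

section
/- Let σ : [0,T]² × ℝ → ℝ admit a mixed derivative ∂²_{x,t} σ satisfying |∂²_{x,t}σ(t,s,x) - ∂²_{x,t}σ(t,s,y)| ≤ K_N|x-y|^δ for |x|,|y| ≤ N and |∂²_{x,t}σ(t,s₁,x) - ∂²_{x,t}σ(t,s₂,x)| ≤ K|s₁-s₂|^β, and |∂²_{x,t}σ| ≤ K_N on bounded sets. Then for all t₁, t₂, s₁, s₂ ∈ [0,T] and |x₁|,|x₂|,|x₃|,|x₄| ≤ N, |σ(t₁,s₁,x₁) - σ(t₁,s₁,x₂) - σ(t₂,s₁,x₁) + σ(t₂,s₁,x₂) - σ(t₁,s₂,x₃) + σ(t₁,s₂,x₄)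 + σ(t₂,s₂,x₃) - σ(t₂,s₂,x₄)| ≤ K_N|t₁-t₂||x₁-x₂-x₃+x₄| + K|x₁-x₂||t₁-t₂||s₁-s₂|^β + K_N|x₁-x₂||t₁-t₂|(|x₁-x₃|^δ + |x₂-x₄|^δ). -/
open Real Set

/-
Move x₂ → x₁ and x₄ → x₃ simultaneously along straight lines, u ∈ [0,1]. The eight-term expression
is then the mixed difference, in (t, u), of F(t, u) = σ(t, s₁, x₂ + u(x₁ - x₂)) - σ(t, s₂, x₄ + u(x₃ - x₄)),
so by the mean value theorem applied in u and then in t it is bounded by |t₁ - t₂| times a bound on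
∂²_{u,t} F = (x₁ - x₂) ∂²_{x,t}σ(t, s₁, ·) - (x₃ - x₄) ∂²_{x,t}σ(t, s₂, ·). Splitting that as
(x₁ - x₂)[Δ in s] + (x₁ - x₂)[Δ in x] + (x₁ - x₂ - x₃ + x₄) ∂²_{x,t}σ gives the three terms, since
the two moving points stay within max(|x₁ - x₃|, |x₂ - x₄|) of each other.
-/

lemma abs_add_mul_sub_le {x y N u : ℝ} (hx : |x| ≤ N) (hy : |y| ≤ N) (hu : u ∈ Icc (0 : ℝ) 1) :
    |x + u * (y - x)| ≤ N := by
  obtain ⟨hu₀, hu₁⟩ := hu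
  rw [abs_le] at *
  constructor <;> nlinarith

lemma hasDerivAt_comp_add_mul {f f' : ℝ → ℝ} (hf : ∀ x, HasDerivAt f (f' x) x) (a b u : ℝ) :
    HasDerivAt (fun u => f (a + u * b)) (b * f' (a + u * b)) u := by
  have hline : HasDerivAt (fun u => a + u * b) b u := by
    simpa using ((hasDerivAt_id u).mul_const b).const_add a
  exact ((hf (a + u * b)).comp u hline).congr_deriv (mul_comm _ _)

lemma abs_mixed_diff_le {f g h : ℝ → ℝ → ℝ} {a b C : ℝ} (hab : a ≤ b)
    (hf : ∀ τ u, HasDerivAt (f τ) (g τ u) u)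
    (hg : ∀ τ u, HasDerivAt (fun τ => g τ u) (h τ u) τ)
    (hh : ∀ τ, ∀ u ∈ Icc a b, |h τ u| ≤ C) (t₁ t₂ : ℝ) :
    |f t₁ b - f t₂ b - (f t₁ a - f t₂ a)| ≤ C * |t₁ - t₂| * (b - a) := by
  have hg_diff : ∀ u ∈ Icc a b, ‖g t₁ u - g t₂ u‖ ≤ C * |t₁ - t₂| := fun u hu =>
    convex_univ.norm_image_sub_le_of_norm_hasDerivWithin_le
      (fun τ _ => (hg τ u).hasDerivWithinAt) (fun τ _ => hh τ u hu) (mem_univ t₂) (mem_univ t₁)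
  have := (convex_Icc a b).norm_image_sub_le_of_norm_hasDerivWithin_le
    (f := fun u => f t₁ u - f t₂ u)
    (fun u _ => ((hf t₁ u).sub (hf t₂ u)).hasDerivWithinAt) hg_diff
    (left_mem_Icc.2 hab) (right_mem_Icc.2 hab)
  rwa [Real.norm_eq_abs, Real.norm_eq_abs, abs_of_nonneg (sub_nonneg.2 hab)] at this

lemma abs_mul_sub_mul_le_of_holder {φ : ℝ → ℝ → ℝ} {N K KN β δ : ℝ} (hKN : 0 ≤ KN) (hδ : 0 ≤ δ)
    (hbound : ∀ s x, |x| ≤ N → |φ s x| ≤ KN)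
    (hxHolder : ∀ s x y, |x| ≤ N → |y| ≤ N → |φ s x - φ s y| ≤ KN * |x - y| ^ δ)
    (hsHolder : ∀ s₁ s₂ x, |φ s₁ x - φ s₂ x| ≤ K * |s₁ - s₂| ^ β)
    {s₁ s₂ x₁ x₂ x₃ x₄ u : ℝ} (h₁ : |x₁| ≤ N) (h₂ : |x₂| ≤ N) (h₃ : |x₃| ≤ N) (h₄ : |x₄| ≤ N)
    (hu : u ∈ Icc (0 : ℝ) 1) :
    |(x₁ - x₂) * φ s₁ (x₂ + u * (x₁ - x₂)) - (x₃ - x₄) * φ s₂ (x₄ + u * (x₃ - x₄))|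
      ≤ KN * |x₁ - x₂ - x₃ + x₄| + K * |x₁ - x₂| * |s₁ - s₂| ^ β
        + KN * |x₁ - x₂| * (|x₁ - x₃| ^ δ + |x₂ - x₄| ^ δ) := by
  set y := x₂ + u * (x₁ - x₂)
  set z := x₄ + u * (x₃ - x₄)
  have hy : |y| ≤ N := abs_add_mul_sub_le h₂ h₁ hu
  have hz : |z| ≤ N := abs_add_mul_sub_le h₄ h₃ hu
  have hyz : |y - z| ^ δ ≤ |x₁ - x₃| ^ δ + |x₂ - x₄| ^ δ := by
    have hdist : |y - z| ≤ max |x₂ - x₄| |x₁ - x₃| := by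
      have := abs_add_mul_sub_le (le_max_left |x₂ - x₄| |x₁ - x₃|) (le_max_right _ _) hu
      convert this using 2
      ring
    refine (rpow_le_rpow (abs_nonneg _) hdist hδ).trans ?_
    rcases max_choice |x₂ - x₄| |x₁ - x₃| with h | h <;> rw [h]
    · exact le_add_of_nonneg_left (by positivity)
    · exact le_add_of_nonneg_right (by positivity)
  calc |(x₁ - x₂) * φ s₁ y - (x₃ - x₄) * φ s₂ z|
      = |(x₁ - x₂) * (φ s₁ y - φ s₂ y) + (x₁ - x₂) * (φ s₂ y - φ s₂ z)
          + (x₁ - x₂ - x₃ + x₄) * φ s₂ z| := by ring_nf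
    _ ≤ |x₁ - x₂| * |φ s₁ y - φ s₂ y| + |x₁ - x₂| * |φ s₂ y - φ s₂ z|
          + |x₁ - x₂ - x₃ + x₄| * |φ s₂ z| := by
      simp only [← abs_mul]
      exact (abs_add_le _ _).trans (add_le_add_left (abs_add_le _ _) _)
    _ ≤ |x₁ - x₂| * (K * |s₁ - s₂| ^ β) + |x₁ - x₂| * (KN * (|x₁ - x₃| ^ δ + |x₂ - x₄| ^ δ))
          + |x₁ - x₂ - x₃ + x₄| * KN := by
      gcongr
      · exact hsHolder s₁ s₂ y
      · exact (hxHolder s₂ y z hy hz).trans (by gcongr)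
      · exact hbound s₂ z hz
    _ = _ := by ring

theorem stmt_12_general (T N K KN β δ : ℝ) (hKN : 0 ≤ KN) (hδ0 : 0 < δ)
    (σ σx σxt : ℝ → ℝ → ℝ → ℝ)
    (hderivx : ∀ t s x : ℝ, HasDerivAt (fun y => σ t s y) (σx t s x) x)
    (hderivxt : ∀ t s x : ℝ, HasDerivAt (fun τ => σx τ s x) (σxt t s x) t)
    (hbound : ∀ t s x : ℝ, |x| ≤ N → |σxt t s x| ≤ KN)
    (hxHolder : ∀ t s x y : ℝ, |x| ≤ N → |y| ≤ N →
      |σxt t s x - σxt t s y| ≤ KN * |x - y| ^ δ)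
    (hsHolder : ∀ t s₁ s₂ x : ℝ, |σxt t s₁ x - σxt t s₂ x| ≤ K * |s₁ - s₂| ^ β) :
    ∀ t₁ ∈ Icc (0:ℝ) T, ∀ t₂ ∈ Icc (0:ℝ) T, ∀ s₁ ∈ Icc (0:ℝ) T, ∀ s₂ ∈ Icc (0:ℝ) T,
      ∀ x₁ x₂ x₃ x₄ : ℝ, |x₁| ≤ N → |x₂| ≤ N → |x₃| ≤ N → |x₄| ≤ N →
        |σ t₁ s₁ x₁ - σ t₁ s₁ x₂ - σ t₂ s₁ x₁ + σ t₂ s₁ x₂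
            - σ t₁ s₂ x₃ + σ t₁ s₂ x₄ + σ t₂ s₂ x₃ - σ t₂ s₂ x₄|
          ≤ KN * |t₁ - t₂| * |x₁ - x₂ - x₃ + x₄|
            + K * |x₁ - x₂| * |t₁ - t₂| * |s₁ - s₂| ^ β
            + KN * |x₁ - x₂| * |t₁ - t₂| * (|x₁ - x₃| ^ δ + |x₂ - x₄| ^ δ) := by
  intro t₁ _ t₂ _ s₁ _ s₂ _ x₁ x₂ x₃ x₄ h₁ h₂ h₃ h₄
  have hmix := abs_mixed_diff_le zero_le_one
    (f := fun τ u => σ τ s₁ (x₂ + u * (x₁ - x₂)) - σ τ s₂ (x₄ + u * (x₃ - x₄)))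
    (fun τ u => (hasDerivAt_comp_add_mul (hderivx τ s₁) x₂ (x₁ - x₂) u).sub
      (hasDerivAt_comp_add_mul (hderivx τ s₂) x₄ (x₃ - x₄) u))
    (fun τ u => ((hderivxt τ s₁ _).const_mul _).sub ((hderivxt τ s₂ _).const_mul _))
    (fun τ u hu => abs_mul_sub_mul_le_of_holder hKN hδ0.le (hbound τ) (hxHolder τ) (hsHolder τ)
      h₁ h₂ h₃ h₄ hu) t₁ t₂
  convert hmix using 1
  · congr 1
    ring_nf
  · ring

theorem stmt_12 (T N K KN β δ : ℝ) (hT : 0 < T) (hN : 0 < N) (hK : 0 ≤ K) (hKN : 0 ≤ KN)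
    (hβ0 : 0 < β) (hβ1 : β ≤ 1) (hδ0 : 0 < δ) (hδ1 : δ ≤ 1)
    (σ σx σxt : ℝ → ℝ → ℝ → ℝ)
    (hderivx : ∀ t s x : ℝ, HasDerivAt (fun y => σ t s y) (σx t s x) x)
    (hderivxt : ∀ t s x : ℝ, HasDerivAt (fun τ => σx τ s x) (σxt t s x) t)
    (hbound : ∀ t s x : ℝ, |x| ≤ N → |σxt t s x| ≤ KN)
    (hxHolder : ∀ t s x y : ℝ, |x| ≤ N → |y| ≤ N →
      |σxt t s x - σxt t s y| ≤ KN * |x - y| ^ δ)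
    (hsHolder : ∀ t s₁ s₂ x : ℝ, |σxt t s₁ x - σxt t s₂ x| ≤ K * |s₁ - s₂| ^ β) :
    ∀ t₁ ∈ Icc (0:ℝ) T, ∀ t₂ ∈ Icc (0:ℝ) T, ∀ s₁ ∈ Icc (0:ℝ) T, ∀ s₂ ∈ Icc (0:ℝ) T,
      ∀ x₁ x₂ x₃ x₄ : ℝ, |x₁| ≤ N → |x₂| ≤ N → |x₃| ≤ N → |x₄| ≤ N →
        |σ t₁ s₁ x₁ - σ t₁ s₁ x₂ - σ t₂ s₁ x₁ + σ t₂ s₁ x₂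
            - σ t₁ s₂ x₃ + σ t₁ s₂ x₄ + σ t₂ s₂ x₃ - σ t₂ s₂ x₄|
          ≤ KN * |t₁ - t₂| * |x₁ - x₂ - x₃ + x₄|
            + K * |x₁ - x₂| * |t₁ - t₂| * |s₁ - s₂| ^ β
            + KN * |x₁ - x₂| * |t₁ - t₂| * (|x₁ - x₃| ^ δ + |x₂ - x₄| ^ δ) :=
  stmt_12_general T N K KN β δ hKN hδ0 σ σx σxt hderivx hderivxt hbound hxHolder hsHolder
end

section
/- Let 0 < α < 1/2, T > 0, and h : [0,T] → [0,∞) continuous. Suppose there exist constants A, B ≥ 0 and exponents 0 < a, b < 1 such that h(t) ≤ A (1 + ∫₀ᵗ ((t-s)^{-a} + s^{-b}) h(s) ds) for all t ∈ [0,T]. Then there exist constants C₁, C₂ depending only on a, b, T such that h(t) ≤ C₁ A exp(C₂ A^{1/(1-max(a,b))}) for all t ∈ [0,T]. -/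
open Real Set intervalIntegral
open MeasureTheory

lemma my_exp_int (l c d : ℝ) (hl : 0 < l) :
    ∫ u in c..d, Real.exp (-(l*u)) = (Real.exp (-(l*c)) - Real.exp (-(l*d)))/l := by
  have h1 : ((-l) * ∫ u in c..d, Real.exp ((-l) * u))
      = Real.exp ((-l)*d) - Real.exp ((-l)*c) := by
    rw [intervalIntegral.mul_integral_comp_mul_left, integral_exp]
  have hne : l ≠ 0 := ne_of_gt hl
  simp only [neg_mul] at h1 ⊢
  field_simp
  linarith [h1]

lemma my_exp_cont (l : ℝ) : Continuous (fun u : ℝ => Real.exp (-(l*u))) :=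
  Real.continuous_exp.comp ((continuous_const.mul continuous_id).neg)

lemma my_exp_cont' (l t : ℝ) : Continuous (fun s : ℝ => Real.exp (-(l*(t-s)))) :=
  Real.continuous_exp.comp ((continuous_const.mul (continuous_const.sub continuous_id)).neg)

lemma my_rpow_exp_int (r l c d : ℝ) (hr : -1 < r) :
    IntervalIntegrable (fun u => u ^ r * Real.exp (-(l*u))) volume c d :=
  (intervalIntegrable_rpow' hr).mul_continuousOn (my_exp_cont l).continuousOn

lemma my_rpow_le_exp (x c : ℝ) (hx : 0 ≤ x) (hc0 : 0 ≤ c) (hc1 : c ≤ 1) :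
    x ^ c ≤ Real.exp x := by
  rcases le_total x 1 with hx1 | hx1
  · exact le_trans (Real.rpow_le_one hx hx1 hc0) (Real.one_le_exp hx)
  · calc x ^ c ≤ x ^ (1:ℝ) := Real.rpow_le_rpow_of_exponent_le hx1 hc1
    _ = x := Real.rpow_one x
    _ ≤ Real.exp x := by linarith [Real.add_one_le_exp x]

lemma my_rpow_int_eval (a c : ℝ) (ha1 : a < 1) (hc : 0 ≤ c) :
    ∫ u in (0:ℝ)..c, u ^ (-a) = c ^ (1-a) / (1-a) := by
  rw [integral_rpow (Or.inl (by linarith))]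
  rw [Real.zero_rpow (by intro hcon; linarith : -a + 1 ≠ 0)]
  have : -a + 1 = 1 - a := by ring
  rw [this]
  ring

lemma my_inv_rpow_neg (l e : ℝ) (hl : 0 < l) : (1/l) ^ (-e) = l ^ e := by
  rw [one_div, ← Real.rpow_neg_one l, ← Real.rpow_mul hl.le]
  norm_num

-- J1a : small interval bound
lemma my_J1a (a l c : ℝ) (ha0 : 0 < a) (ha1 : a < 1) (hl : 0 < l) (hc0 : 0 ≤ c)
    (hc : c ≤ 1/l) :
    ∫ u in (0:ℝ)..c, u ^ (-a) * Real.exp (-(l*u)) ≤ l ^ (a-1) / (1-a) := by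
  have h1 : ∫ u in (0:ℝ)..c, u ^ (-a) * Real.exp (-(l*u)) ≤ ∫ u in (0:ℝ)..c, u ^ (-a) := by
    apply intervalIntegral.integral_mono_on hc0 (my_rpow_exp_int _ _ _ _ (by linarith))
      (intervalIntegrable_rpow' (by linarith))
    intro x hx
    exact mul_le_of_le_one_right (Real.rpow_nonneg hx.1 _)
      (Real.exp_le_one_iff.mpr (by nlinarith [hx.1]))
  rw [my_rpow_int_eval a c ha1 hc0] at h1
  have h2 : c ^ (1-a) ≤ (1/l) ^ (1-a) :=
    Real.rpow_le_rpow hc0 hc (by linarith)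
  have h3 : (1/l) ^ (1-a) = l ^ (a-1) := by
    have := my_inv_rpow_neg l (a-1) hl
    rw [← this]; norm_num
  have h4 : (0:ℝ) < 1 - a := by linarith
  calc ∫ u in (0:ℝ)..c, u ^ (-a) * Real.exp (-(l*u)) ≤ c ^ (1-a)/(1-a) := h1
    _ ≤ (1/l) ^ (1-a)/(1-a) := by gcongr
    _ = l ^ (a-1)/(1-a) := by rw [h3]


lemma my_J1 (a l t : ℝ) (ha0 : 0 < a) (ha1 : a < 1) (hl : 1 ≤ l) (ht : 0 ≤ t) :
    ∫ u in (0:ℝ)..t, u ^ (-a) * Real.exp (-(l*u)) ≤ (1/(1-a) + 1) * l ^ (a-1) := by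
  have hl0 : 0 < l := by linarith
  have hla : (0:ℝ) ≤ l ^ (a-1) := Real.rpow_nonneg hl0.le _
  have h1a : (0:ℝ) < 1 - a := by linarith
  rcases le_or_gt t (1/l) with hc | hc
  · calc ∫ u in (0:ℝ)..t, u ^ (-a) * Real.exp (-(l*u)) ≤ l ^ (a-1)/(1-a) :=
        my_J1a a l t ha0 ha1 hl0 ht hc
      _ = (1/(1-a)) * l ^ (a-1) := by ring
      _ ≤ (1/(1-a) + 1) * l ^ (a-1) := by nlinarith
  · have hint1 := my_rpow_exp_int (-a) l 0 (1/l) (by linarith)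
    have hint2 := my_rpow_exp_int (-a) l (1/l) t (by linarith)
    rw [← intervalIntegral.integral_add_adjacent_intervals hint1 hint2]
    have hpiece1 : ∫ u in (0:ℝ)..(1/l), u ^ (-a) * Real.exp (-(l*u)) ≤ l ^ (a-1)/(1-a) :=
      my_J1a a l (1/l) ha0 ha1 hl0 (by positivity) le_rfl
    have hpiece2 : ∫ u in (1/l)..t, u ^ (-a) * Real.exp (-(l*u)) ≤ l ^ (a-1) := by
      have hmono : ∫ u in (1/l)..t, u ^ (-a) * Real.exp (-(l*u))
          ≤ ∫ u in (1/l)..t, l ^ a * Real.exp (-(l*u)) := by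
        apply intervalIntegral.integral_mono_on hc.le hint2
          ((continuous_const.mul (my_exp_cont l)).intervalIntegrable _ _)
        intro x hx
        have hx0 : 0 < x := lt_of_lt_of_le (by positivity) hx.1
        have : x ^ (-a) ≤ (1/l) ^ (-a) :=
          Real.rpow_le_rpow_of_nonpos (by positivity) hx.1 (by linarith)
        rw [my_inv_rpow_neg l a hl0] at this
        exact mul_le_mul_of_nonneg_right this (Real.exp_nonneg _)
      rw [intervalIntegral.integral_const_mul, my_exp_int l _ _ hl0] at hmono
      have hexp : (Real.exp (-(l*(1/l))) - Real.exp (-(l*t)))/l ≤ 1/l := by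
        gcongr
        have h0 : (0:ℝ) ≤ l*(1/l) := by positivity
        have := Real.exp_le_one_iff.mpr (show -(l*(1/l)) ≤ 0 by linarith)
        have := Real.exp_nonneg (-(l*t))
        linarith
      have hfin : l ^ a * ((Real.exp (-(l*(1/l))) - Real.exp (-(l*t)))/l) ≤ l ^ (a-1) := by
        have hcalc : l ^ a * (1/l) = l ^ (a-1) := by
          rw [Real.rpow_sub hl0, Real.rpow_one]; ring
        calc l ^ a * ((Real.exp (-(l*(1/l))) - Real.exp (-(l*t)))/l)
            ≤ l ^ a * (1/l) := by
              apply mul_le_mul_of_nonneg_left hexp (Real.rpow_nonneg hl0.le _)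
          _ = l ^ (a-1) := hcalc
      linarith
    have hring : (1/(1-a) + 1) * l ^ (a-1) = l ^ (a-1)/(1-a) + l ^ (a-1) := by ring
    linarith [hpiece1, hpiece2]


lemma my_J2 (b l t : ℝ) (hb0 : 0 < b) (hb1 : b < 1) (hl : 1 ≤ l) (ht : 0 ≤ t) :
    ∫ s in (0:ℝ)..t, s ^ (-b) * Real.exp (-(l*(t-s))) ≤ (3/(1-b) + 1) * l ^ (b-1) := by
  have hl0 : 0 < l := by linarith
  have hla : (0:ℝ) ≤ l ^ (b-1) := Real.rpow_nonneg hl0.le _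
  have h1b : (0:ℝ) < 1 - b := by linarith
  have hint : IntervalIntegrable (fun s => s ^ (-b) * Real.exp (-(l*(t-s)))) volume 0 t :=
    (intervalIntegrable_rpow' (by linarith)).mul_continuousOn (my_exp_cont' l t).continuousOn
  have hinvl : (1/l) ^ (1-b) = l ^ (b-1) := by
    have := my_inv_rpow_neg l (b-1) hl0
    rw [← this]; norm_num
  rcases le_or_gt t (2/l) with hc | hc
  · have h1 : ∫ s in (0:ℝ)..t, s ^ (-b) * Real.exp (-(l*(t-s))) ≤ ∫ s in (0:ℝ)..t, s ^ (-b) := by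
      apply intervalIntegral.integral_mono_on ht hint (intervalIntegrable_rpow' (by linarith))
      intro x hx
      apply mul_le_of_le_one_right (Real.rpow_nonneg hx.1 _)
      apply Real.exp_le_one_iff.mpr
      nlinarith [hx.2]
    rw [my_rpow_int_eval b t hb1 ht] at h1
    have h2 : t ^ (1-b) ≤ (2/l) ^ (1-b) := Real.rpow_le_rpow ht hc (by linarith)
    have h3 : (2/l) ^ (1-b) ≤ 2 * l ^ (b-1) := by
      have e1 : (2/l : ℝ) = 2 * (1/l) := by ring
      rw [e1, Real.mul_rpow (by norm_num) (by positivity), hinvl]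
      have : (2:ℝ) ^ (1-b) ≤ 2 ^ (1:ℝ) :=
        Real.rpow_le_rpow_of_exponent_le one_le_two (by linarith)
      rw [Real.rpow_one] at this
      nlinarith
    have h4 : t ^ (1-b)/(1-b) ≤ 2 * l ^ (b-1)/(1-b) := by
      gcongr; linarith
    have h5 : 2 * l ^ (b-1)/(1-b) ≤ (3/(1-b) + 1) * l ^ (b-1) := by
      have h7 : (0:ℝ) ≤ l ^ (b-1)/(1-b) := by positivity
      have e : (3/(1-b)+1) * l ^ (b-1) = 3*(l ^ (b-1)/(1-b)) + l ^ (b-1) := by ring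
      have e2 : 2 * l ^ (b-1)/(1-b) = 2*(l ^ (b-1)/(1-b)) := by ring
      linarith
    linarith
  · have hthalf : (0:ℝ) < t/2 := by
      have : (0:ℝ) < 2/l := by positivity
      linarith
    have hinv_lt : 1/l < t/2 := by
      have e : (1:ℝ)/l = (2/l)/2 := by ring
      linarith
    have hint1 : IntervalIntegrable (fun s => s ^ (-b) * Real.exp (-(l*(t-s)))) volume 0 (t/2) :=
      (intervalIntegrable_rpow' (by linarith)).mul_continuousOn (my_exp_cont' l t).continuousOn
    have hint2 : IntervalIntegrable (fun s => s ^ (-b) * Real.exp (-(l*(t-s)))) volume (t/2) t :=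
      (intervalIntegrable_rpow' (by linarith)).mul_continuousOn (my_exp_cont' l t).continuousOn
    rw [← intervalIntegral.integral_add_adjacent_intervals hint1 hint2]
    have hpiece1 : ∫ s in (0:ℝ)..(t/2), s ^ (-b) * Real.exp (-(l*(t-s))) ≤ l ^ (b-1)/(1-b) := by
      have hmono : ∫ s in (0:ℝ)..(t/2), s ^ (-b) * Real.exp (-(l*(t-s)))
          ≤ ∫ s in (0:ℝ)..(t/2), s ^ (-b) * Real.exp (-(l*(t/2))) := by
        apply intervalIntegral.integral_mono_on hthalf.le hint1
          ((intervalIntegrable_rpow' (by linarith)).mul_const _)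
        intro x hx
        apply mul_le_mul_of_nonneg_left ?_ (Real.rpow_nonneg hx.1 _)
        apply Real.exp_le_exp.mpr
        nlinarith [hx.2]
      rw [intervalIntegral.integral_mul_const, my_rpow_int_eval b (t/2) hb1 hthalf.le] at hmono
      have hkey : (t/2) ^ (1-b) * Real.exp (-(l*(t/2))) ≤ l ^ (b-1) := by
        have hx0 : (0:ℝ) < l * (t/2) := by positivity
        have e1 : (t/2) ^ (1-b) = (l*(t/2)) ^ (1-b) / l ^ (1-b) := by
          rw [← Real.div_rpow hx0.le hl0.le]
          congr 1
          field_simp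
        rw [e1]
        have h2 := my_rpow_le_exp (l*(t/2)) (1-b) hx0.le (by linarith) (by linarith)
        calc (l*(t/2)) ^ (1-b) / l ^ (1-b) * Real.exp (-(l*(t/2)))
            ≤ Real.exp (l*(t/2)) / l ^ (1-b) * Real.exp (-(l*(t/2))) := by
              gcongr
          _ = 1 / l ^ (1-b) := by
              rw [div_mul_eq_mul_div, ← Real.exp_add]
              simp
          _ = (1/l) ^ (1-b) := by rw [Real.div_rpow (by norm_num) hl0.le]; norm_num
          _ = l ^ (b-1) := hinvl
      calc ∫ s in (0:ℝ)..(t/2), s ^ (-b) * Real.exp (-(l*(t-s)))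
          ≤ (t/2) ^ (1-b)/(1-b) * Real.exp (-(l*(t/2))) := hmono
        _ = ((t/2) ^ (1-b) * Real.exp (-(l*(t/2))))/(1-b) := by ring
        _ ≤ l ^ (b-1)/(1-b) := by gcongr
    have hpiece2 : ∫ s in (t/2)..t, s ^ (-b) * Real.exp (-(l*(t-s))) ≤ l ^ (b-1) := by
      have hmono : ∫ s in (t/2)..t, s ^ (-b) * Real.exp (-(l*(t-s)))
          ≤ ∫ s in (t/2)..t, l ^ b * Real.exp (-(l*(t-s))) := by
        apply intervalIntegral.integral_mono_on (by linarith) hint2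
          ((continuous_const.mul (my_exp_cont' l t)).intervalIntegrable _ _)
        intro x hx
        have hx0 : 0 < x := lt_of_lt_of_le hthalf hx.1
        have h1 : x ^ (-b) ≤ (1/l) ^ (-b) := by
          apply Real.rpow_le_rpow_of_nonpos (by positivity) ?_ (by linarith)
          linarith [hx.1, hinv_lt]
        rw [my_inv_rpow_neg l b hl0] at h1
        exact mul_le_mul_of_nonneg_right h1 (Real.exp_nonneg _)
      have hcomp : ∫ s in (t/2)..t, Real.exp (-(l*(t-s)))
          = ∫ u in (0:ℝ)..(t/2), Real.exp (-(l*u)) := by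
        rw [intervalIntegral.integral_comp_sub_left (fun u => Real.exp (-(l*u))) t]
        have e : t - t/2 = t/2 := by ring
        rw [e, sub_self]
      rw [intervalIntegral.integral_const_mul, hcomp, my_exp_int l _ _ hl0] at hmono
      have hexp : (Real.exp (-(l*0)) - Real.exp (-(l*(t/2))))/l ≤ 1/l := by
        gcongr
        have := Real.exp_nonneg (-(l*(t/2)))
        simp only [mul_zero, neg_zero, Real.exp_zero]
        linarith
      have hcalc : l ^ b * (1/l) = l ^ (b-1) := by
        rw [Real.rpow_sub hl0, Real.rpow_one]; ring
      calc ∫ s in (t/2)..t, s ^ (-b) * Real.exp (-(l*(t-s)))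
          ≤ l ^ b * ((Real.exp (-(l*0)) - Real.exp (-(l*(t/2))))/l) := hmono
        _ ≤ l ^ b * (1/l) := mul_le_mul_of_nonneg_left hexp (Real.rpow_nonneg hl0.le _)
        _ = l ^ (b-1) := hcalc
    have h6 : (0:ℝ) < 1/(1-b) := by positivity
    have hring : (3/(1-b) + 1) * l ^ (b-1) = 3 * (l ^ (b-1)/(1-b)) + l ^ (b-1) := by ring
    have h7 : (0:ℝ) ≤ l ^ (b-1)/(1-b) := by positivity
    linarith

theorem stmt_18 (a b T : ℝ) (ha0 : 0 < a) (ha1 : a < 1) (hb0 : 0 < b) (hb1 : b < 1)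
    (hT : 0 < T) :
    ∃ C₁ C₂ : ℝ, 0 ≤ C₁ ∧ 0 ≤ C₂ ∧
      ∀ h : ℝ → ℝ, ContinuousOn h (Icc (0:ℝ) T) →
        (∀ t ∈ Icc (0:ℝ) T, 0 ≤ h t) →
        ∀ A : ℝ, 1 ≤ A →
          (∀ t ∈ Icc (0:ℝ) T,
            h t ≤ A * (1 + ∫ s in (0:ℝ)..t, ((t - s) ^ (-a) + s ^ (-b)) * h s)) →
          ∀ t ∈ Icc (0:ℝ) T,
            h t ≤ C₁ * A * Real.exp (C₂ * A ^ (1 / (1 - max a b))) := by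
  set m : ℝ := max a b with hm
  have hm1 : m < 1 := max_lt ha1 hb1
  have hm0 : 0 < m := lt_of_lt_of_le ha0 (le_max_left a b)
  set D : ℝ := (1/(1-a) + 1) + (3/(1-b) + 1) with hD
  have h1a : (0:ℝ) < 1 - a := by linarith
  have h1b : (0:ℝ) < 1 - b := by linarith
  have hD2 : (2:ℝ) ≤ D := by
    have h1 : (0:ℝ) < 1/(1-a) := by positivity
    have h2 : (0:ℝ) < 3/(1-b) := by positivity
    simp only [hD]; linarith
  have hDpos : 0 < D := by linarith
  set e : ℝ := 1/(1-m) with he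
  have he0 : 0 < e := by
    have : (0:ℝ) < 1 - m := by linarith
    positivity
  refine ⟨2, T * (2*D) ^ e, by norm_num, by positivity, ?_⟩
  intro h hcont hpos A hA hyp
  set l : ℝ := (2*D*A) ^ e with hldef
  have h2DA : (1:ℝ) ≤ 2*D*A := by nlinarith
  have hl1 : (1:ℝ) ≤ l := Real.one_le_rpow h2DA he0.le
  have hl0 : (0:ℝ) < l := by linarith
  -- l ^ (m-1) = (2*D*A)⁻¹
  have h2DA0 : (0:ℝ) ≤ 2*D*A := by linarith
  have hlm : l ^ (m-1) = (2*D*A)⁻¹ := by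
    have h1 : l ^ (m-1) = (2*D*A) ^ (e*(m-1)) := by
      rw [hldef, ← Real.rpow_mul h2DA0]
    have hem : e*(m-1) = -1 := by
      have hne : (1:ℝ) - m ≠ 0 := by linarith
      rw [he, div_mul_eq_mul_div, one_mul, div_eq_iff hne]
      ring
    rw [h1, hem, Real.rpow_neg_one]
  have hAD : A * (D * l ^ (m-1)) = 1/2 := by
    rw [hlm]
    have hne : (2*D*A : ℝ) ≠ 0 := by positivity
    field_simp
  set g : ℝ → ℝ := fun u => Real.exp (-(l*u)) * h u with hg
  have hgcont : ContinuousOn g (Icc 0 T) := ((my_exp_cont l).continuousOn).mul hcont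
  obtain ⟨t₀, ht₀mem, ht₀max⟩ := isCompact_Icc.exists_isMaxOn
    ⟨0, mem_Icc.mpr ⟨le_rfl, hT.le⟩⟩ hgcont
  set G := g t₀ with hGdef
  have ht₀0 : 0 ≤ t₀ := ht₀mem.1
  have ht₀T : t₀ ≤ T := ht₀mem.2
  have hG0 : 0 ≤ G := mul_nonneg (Real.exp_nonneg _) (hpos t₀ ht₀mem)
  have hsub : Icc (0:ℝ) t₀ ⊆ Icc 0 T := Icc_subset_Icc le_rfl ht₀T
  have hhc : ContinuousOn h (uIcc (0:ℝ) t₀) := hcont.mono (by rw [uIcc_of_le ht₀0]; exact hsub)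
  have hk1 : IntervalIntegrable (fun s => (t₀ - s) ^ (-a)) volume 0 t₀ := by
    have := ((intervalIntegrable_rpow' (by linarith : (-1:ℝ) < -a)
      (a := t₀) (b := 0)).comp_sub_left t₀)
    simpa using this
  have hk2 : IntervalIntegrable (fun s => s ^ (-b)) volume 0 t₀ :=
    intervalIntegrable_rpow' (by linarith)
  have hK : IntervalIntegrable (fun s => ((t₀ - s) ^ (-a) + s ^ (-b))) volume 0 t₀ := hk1.add hk2
  have hKh : IntervalIntegrable (fun s => ((t₀ - s) ^ (-a) + s ^ (-b)) * h s) volume 0 t₀ :=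
    hK.mul_continuousOn hhc
  have hKe : IntervalIntegrable
      (fun s => ((t₀ - s) ^ (-a) + s ^ (-b)) * Real.exp (-(l*(t₀ - s)))) volume 0 t₀ :=
    hK.mul_continuousOn (my_exp_cont' l t₀).continuousOn
  have hkernel : ∫ s in (0:ℝ)..t₀, ((t₀ - s) ^ (-a) + s ^ (-b)) * Real.exp (-(l*(t₀ - s)))
      ≤ D * l ^ (m-1) := by
    have hsplit : ∫ s in (0:ℝ)..t₀, ((t₀ - s) ^ (-a) + s ^ (-b)) * Real.exp (-(l*(t₀ - s)))
        = (∫ s in (0:ℝ)..t₀, (t₀ - s) ^ (-a) * Real.exp (-(l*(t₀ - s))))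
          + ∫ s in (0:ℝ)..t₀, s ^ (-b) * Real.exp (-(l*(t₀ - s))) := by
      rw [← intervalIntegral.integral_add
        (hk1.mul_continuousOn (my_exp_cont' l t₀).continuousOn)
        ((intervalIntegrable_rpow' (by linarith : (-1:ℝ) < -b)).mul_continuousOn
          (my_exp_cont' l t₀).continuousOn)]
      congr 1
      ext s
      ring
    have hfirst : ∫ s in (0:ℝ)..t₀, (t₀ - s) ^ (-a) * Real.exp (-(l*(t₀ - s)))
        ≤ (1/(1-a)+1) * l ^ (a-1) := by
      have hcomp : ∫ s in (0:ℝ)..t₀, (t₀ - s) ^ (-a) * Real.exp (-(l*(t₀ - s)))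
          = ∫ u in (0:ℝ)..t₀, u ^ (-a) * Real.exp (-(l*u)) := by
        rw [intervalIntegral.integral_comp_sub_left (fun u => u ^ (-a) * Real.exp (-(l*u))) t₀]
        rw [sub_self, sub_zero]
      rw [hcomp]
      exact my_J1 a l t₀ ha0 ha1 hl1 ht₀0
    have hsecond := my_J2 b l t₀ hb0 hb1 hl1 ht₀0
    have hba1 : l ^ (a-1) ≤ l ^ (m-1) :=
      Real.rpow_le_rpow_of_exponent_le hl1 (sub_le_sub_right (le_max_left a b) 1)
    have hbb1 : l ^ (b-1) ≤ l ^ (m-1) :=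
      Real.rpow_le_rpow_of_exponent_le hl1 (sub_le_sub_right (le_max_right a b) 1)
    have hca : (0:ℝ) ≤ 1/(1-a)+1 := by positivity
    have hcb : (0:ℝ) ≤ 3/(1-b)+1 := by positivity
    rw [hsplit]
    calc (∫ s in (0:ℝ)..t₀, (t₀ - s) ^ (-a) * Real.exp (-(l*(t₀ - s))))
          + ∫ s in (0:ℝ)..t₀, s ^ (-b) * Real.exp (-(l*(t₀ - s)))
        ≤ (1/(1-a)+1) * l ^ (a-1) + (3/(1-b)+1) * l ^ (b-1) := add_le_add hfirst hsecond
      _ ≤ (1/(1-a)+1) * l ^ (m-1) + (3/(1-b)+1) * l ^ (m-1) :=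
          add_le_add (mul_le_mul_of_nonneg_left hba1 hca) (mul_le_mul_of_nonneg_left hbb1 hcb)
      _ = D * l ^ (m-1) := by rw [hD]; ring
  have hmain : G ≤ A + (1/2) * G := by
    have h1 := hyp t₀ ht₀mem
    have hexp0 : (0:ℝ) < Real.exp (-(l*t₀)) := Real.exp_pos _
    have step1 : G ≤ Real.exp (-(l*t₀))
        * (A * (1 + ∫ s in (0:ℝ)..t₀, ((t₀ - s) ^ (-a) + s ^ (-b)) * h s)) := by
      simp only [hGdef, hg]
      exact mul_le_mul_of_nonneg_left h1 hexp0.le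
    have step2 : Real.exp (-(l*t₀)) * ∫ s in (0:ℝ)..t₀, ((t₀ - s) ^ (-a) + s ^ (-b)) * h s
        ≤ D * l ^ (m-1) * G := by
      rw [← intervalIntegral.integral_const_mul]
      have mono : ∫ s in (0:ℝ)..t₀, Real.exp (-(l*t₀)) * (((t₀ - s) ^ (-a) + s ^ (-b)) * h s)
          ≤ ∫ s in (0:ℝ)..t₀,
            (((t₀ - s) ^ (-a) + s ^ (-b)) * Real.exp (-(l*(t₀ - s)))) * G := by
        apply intervalIntegral.integral_mono_on ht₀0 (hKh.const_mul _) (hKe.mul_const _)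
        intro s hs
        have hs0 := hs.1
        have hst := hs.2
        have hK0 : 0 ≤ (t₀ - s) ^ (-a) + s ^ (-b) :=
          add_nonneg (Real.rpow_nonneg (by linarith) _) (Real.rpow_nonneg hs0 _)
        have hge : g s ≤ G := ht₀max (hsub hs)
        have hexpeq : Real.exp (-(l*t₀)) = Real.exp (-(l*(t₀ - s))) * Real.exp (-(l*s)) := by
          rw [← Real.exp_add]; congr 1; ring
        calc Real.exp (-(l*t₀)) * (((t₀ - s) ^ (-a) + s ^ (-b)) * h s)
            = (((t₀ - s) ^ (-a) + s ^ (-b)) * Real.exp (-(l*(t₀ - s)))) * g s := by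
              rw [hexpeq, hg]; ring
          _ ≤ (((t₀ - s) ^ (-a) + s ^ (-b)) * Real.exp (-(l*(t₀ - s)))) * G :=
              mul_le_mul_of_nonneg_left hge (mul_nonneg hK0 (Real.exp_nonneg _))
      rw [intervalIntegral.integral_mul_const] at mono
      exact le_trans mono (mul_le_mul_of_nonneg_right hkernel hG0)
    have hA0 : (0:ℝ) ≤ A := by linarith
    have hexple : Real.exp (-(l*t₀)) ≤ 1 :=
      Real.exp_le_one_iff.mpr (by nlinarith [mul_nonneg hl0.le ht₀0])
    calc G ≤ Real.exp (-(l*t₀))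
          * (A * (1 + ∫ s in (0:ℝ)..t₀, ((t₀ - s) ^ (-a) + s ^ (-b)) * h s)) := step1
      _ = A * Real.exp (-(l*t₀))
          + A * (Real.exp (-(l*t₀)) * ∫ s in (0:ℝ)..t₀, ((t₀ - s) ^ (-a) + s ^ (-b)) * h s) := by
          ring
      _ ≤ A * 1 + A * (D * l ^ (m-1) * G) :=
          add_le_add (mul_le_mul_of_nonneg_left hexple hA0) (mul_le_mul_of_nonneg_left step2 hA0)
      _ = A + (1/2) * G := by
          rw [show A * (D * l ^ (m-1) * G) = (A * (D * l ^ (m-1))) * G by ring, hAD]; ring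
  have hG2A : G ≤ 2*A := by linarith
  intro t htmem
  have e1 : Real.exp (l*t) * Real.exp (-(l*t)) = 1 := by rw [← Real.exp_add]; simp
  have hht : h t = Real.exp (l*t) * g t := by
    calc h t = (Real.exp (l*t) * Real.exp (-(l*t))) * h t := by rw [e1]; ring
      _ = Real.exp (l*t) * g t := by rw [hg]; ring
  have hfin : h t ≤ Real.exp (l*T) * (2*A) := by
    rw [hht]
    exact mul_le_mul (Real.exp_le_exp.mpr (by nlinarith [htmem.2, htmem.1]))
      (le_trans (ht₀max htmem) hG2A)
      (mul_nonneg (Real.exp_nonneg _) (hpos t htmem)) (Real.exp_nonneg _)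
  have hlT : l * T = (T * (2*D) ^ e) * A ^ (1/(1-m)) := by
    rw [hldef, show (2*D*A : ℝ) = (2*D)*A by ring,
      Real.mul_rpow (by linarith) (by linarith), he]
    ring
  calc h t ≤ Real.exp (l*T) * (2*A) := hfin
    _ = 2 * A * Real.exp ((T * (2*D) ^ e) * A ^ (1/(1-m))) := by rw [← hlT]; ring
end

section
/- For 0 < α < β ≤ 1 and λ ≥ 1, sup_{t∈[0,T]} e^{-λt} ∫₀ᵗ∫₀ˢ∫₀ᵘ (t-s)^{-α} (u-y)^{β-α-1} dy du ds ≤ (B(1-α, β-α+2)/((β-α)(β-α+1))) · ((β-2α+2)/e)^{β-2α+2} · λ^{2α-β-2}. -/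
open Real Set intervalIntegral

lemma aux_inner (p u : ℝ) (hp : 0 < p) :
    ∫ y in (0:ℝ)..u, (u - y) ^ (p - 1) = u ^ p / p := by
  have h := intervalIntegral.integral_comp_sub_left (fun x : ℝ => x ^ (p - 1)) u
    (a := 0) (b := u)
  simp only [sub_self, sub_zero] at h
  rw [h, integral_rpow (Or.inl (by linarith)), sub_add_cancel,
    Real.zero_rpow (by linarith : p ≠ 0), sub_zero]

lemma aux_scale (a q t : ℝ) (ht : 0 < t) :
    ∫ x in (0:ℝ)..t, x ^ a * (t - x) ^ q
      = t ^ (a + q + 1) * ∫ x in (0:ℝ)..1, x ^ a * (1 - x) ^ q := by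
  have h := intervalIntegral.integral_comp_mul_left
    (fun x : ℝ => x ^ a * (t - x) ^ q) (c := t) (ne_of_gt ht) (a := 0) (b := 1)
  simp only [mul_zero, mul_one, smul_eq_mul] at h
  have h2 : ∀ y ∈ uIcc (0:ℝ) 1, (t * y) ^ a * (t - t * y) ^ q
      = (t ^ a * t ^ q) * (y ^ a * (1 - y) ^ q) := by
    intro y hy
    rw [uIcc_of_le zero_le_one] at hy
    have hy0 : 0 ≤ y := hy.1
    have hy1 : 0 ≤ 1 - y := by linarith [hy.2]
    rw [Real.mul_rpow ht.le hy0, show t - t * y = t * (1 - y) by ring,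
      Real.mul_rpow ht.le hy1]
    ring
  rw [intervalIntegral.integral_congr h2, intervalIntegral.integral_const_mul] at h
  have ht' : (t:ℝ) ≠ 0 := ne_of_gt ht
  have hpow : t ^ (a + q + 1) = t * (t ^ a * t ^ q) := by
    rw [Real.rpow_add ht, Real.rpow_add ht, Real.rpow_one]; ring
  field_simp at h
  rw [hpow]
  linarith [h]

lemma aux_sup (μ x : ℝ) (hμ : 0 < μ) (hx : 0 ≤ x) :
    x ^ μ * Real.exp (-x) ≤ (μ / Real.exp 1) ^ μ := by
  rcases eq_or_lt_of_le hx with h0 | h0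
  · rw [← h0, Real.zero_rpow (ne_of_gt hμ), zero_mul]
    exact Real.rpow_nonneg (div_nonneg hμ.le (Real.exp_pos 1).le) μ
  · have hde : (0:ℝ) < μ / Real.exp 1 := div_pos hμ (Real.exp_pos 1)
    rw [Real.rpow_def_of_pos h0, Real.rpow_def_of_pos hde, ← Real.exp_add]
    apply Real.exp_le_exp.mpr
    have hlog : Real.log (μ / Real.exp 1) = Real.log μ - 1 := by
      rw [Real.log_div (ne_of_gt hμ) (ne_of_gt (Real.exp_pos 1)), Real.log_exp]
    rw [hlog]
    have key : Real.log (x / μ) ≤ x / μ - 1 := Real.log_le_sub_one_of_pos (div_pos h0 hμ)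
    rw [Real.log_div (ne_of_gt h0) (ne_of_gt hμ)] at key
    have h2 := mul_le_mul_of_nonneg_left key hμ.le
    have h3 : μ * (x / μ - 1) = x - μ := by field_simp
    nlinarith [h2, h3]

theorem stmt_19 (α β T lam : ℝ) (hα0 : 0 < α) (hα1 : α < 1/2) (hαβ : α < β)
    (hβ1 : β ≤ 1) (hT : 0 < T) (hlam : 1 ≤ lam) :
    ∀ t ∈ Icc (0:ℝ) T,
      Real.exp (-lam * t) * ∫ s in (0:ℝ)..t, ∫ u in (0:ℝ)..s, ∫ y in (0:ℝ)..u,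
          (t - s) ^ (-α) * (u - y) ^ (β - α - 1)
        ≤ ((∫ x in (0:ℝ)..1, x ^ (-α) * (1 - x) ^ (β - α + 1))
              / ((β - α) * (β - α + 1)))
            * ((β - 2*α + 2) / Real.exp 1) ^ (β - 2*α + 2)
            * lam ^ (2*α - β - 2) := by
  intro t ht
  obtain ⟨ht0, htT⟩ := ht
  set B : ℝ := ∫ x in (0:ℝ)..1, x ^ (-α) * (1 - x) ^ (β - α + 1) with hBdef
  have hB : 0 ≤ B := by
    apply intervalIntegral.integral_nonneg zero_le_one
    intro x hx
    exact mul_nonneg (Real.rpow_nonneg hx.1 _) (Real.rpow_nonneg (by linarith [hx.2]) _)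
  have hD : (0:ℝ) < (β - α) * (β - α + 1) := by nlinarith
  have hμ : (0:ℝ) < β - 2*α + 2 := by linarith
  have hlam0 : (0:ℝ) < lam := by linarith
  have hRHSnn : 0 ≤ (B / ((β - α) * (β - α + 1)))
      * ((β - 2*α + 2) / Real.exp 1) ^ (β - 2*α + 2) * lam ^ (2*α - β - 2) := by
    apply mul_nonneg (mul_nonneg (div_nonneg hB hD.le) _) (Real.rpow_nonneg hlam0.le _)
    exact Real.rpow_nonneg (div_nonneg hμ.le (Real.exp_pos 1).le) _
  rcases eq_or_lt_of_le ht0 with h0 | h0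
  · rw [← h0, intervalIntegral.integral_same, mul_zero]
    exact hRHSnn
  -- compute the triple integral
  have step1 : ∀ s ∈ uIcc (0:ℝ) t,
      (∫ u in (0:ℝ)..s, ∫ y in (0:ℝ)..u, (t - s) ^ (-α) * (u - y) ^ (β - α - 1))
        = ((t - s) ^ (-α) * s ^ (β - α + 1)) * ((β - α) * (β - α + 1))⁻¹ := by
    intro s hs
    have hin : ∀ u ∈ uIcc (0:ℝ) s,
        (∫ y in (0:ℝ)..u, (t - s) ^ (-α) * (u - y) ^ (β - α - 1))
          = (t - s) ^ (-α) * (u ^ (β - α) / (β - α)) := by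
      intro u _
      rw [intervalIntegral.integral_const_mul, aux_inner (β - α) u (by linarith)]
    rw [intervalIntegral.integral_congr hin, intervalIntegral.integral_const_mul,
      intervalIntegral.integral_div, integral_rpow (Or.inl (by linarith : (-1:ℝ) < β - α)),
      Real.zero_rpow (by linarith : β - α + 1 ≠ 0)]
    rw [mul_inv]
    ring
  rw [intervalIntegral.integral_congr step1, intervalIntegral.integral_mul_const]
  have hsub : (∫ s in (0:ℝ)..t, (t - s) ^ (-α) * s ^ (β - α + 1))
      = ∫ x in (0:ℝ)..t, x ^ (-α) * (t - x) ^ (β - α + 1) := by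
    have h := intervalIntegral.integral_comp_sub_left
      (fun x : ℝ => x ^ (-α) * (t - x) ^ (β - α + 1)) t (a := 0) (b := t)
    simp only [sub_self, sub_zero, sub_sub_cancel] at h
    exact h
  rw [hsub, aux_scale (-α) (β - α + 1) t h0, ← hBdef]
  have hexp : -α + (β - α + 1) + 1 = β - 2*α + 2 := by ring
  rw [hexp]
  -- final inequality
  have key := aux_sup (β - 2*α + 2) (lam * t) hμ (by positivity)
  have hmr : (lam * t) ^ (β - 2*α + 2) = lam ^ (β - 2*α + 2) * t ^ (β - 2*α + 2) :=
    Real.mul_rpow hlam0.le ht0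
  have hlp : (0:ℝ) < lam ^ (β - 2*α + 2) := Real.rpow_pos_of_pos hlam0 _
  have hneg : lam ^ (2*α - β - 2) = (lam ^ (β - 2*α + 2))⁻¹ := by
    rw [show 2*α - β - 2 = -(β - 2*α + 2) by ring, Real.rpow_neg hlam0.le]
  have key2 : t ^ (β - 2*α + 2) * Real.exp (-lam * t)
      ≤ ((β - 2*α + 2) / Real.exp 1) ^ (β - 2*α + 2) * lam ^ (2*α - β - 2) := by
    rw [hneg, neg_mul]
    rw [hmr] at key
    have e1 : t ^ (β - 2*α + 2) * Real.exp (-(lam * t))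
        = (lam ^ (β - 2*α + 2))⁻¹
            * (lam ^ (β - 2*α + 2) * t ^ (β - 2*α + 2) * Real.exp (-(lam * t))) := by
      field_simp
    rw [e1]
    calc (lam ^ (β - 2*α + 2))⁻¹
          * (lam ^ (β - 2*α + 2) * t ^ (β - 2*α + 2) * Real.exp (-(lam * t)))
        ≤ (lam ^ (β - 2*α + 2))⁻¹ * ((β - 2*α + 2) / Real.exp 1) ^ (β - 2*α + 2) :=
          mul_le_mul_of_nonneg_left key (inv_nonneg.mpr hlp.le)
      _ = ((β - 2*α + 2) / Real.exp 1) ^ (β - 2*α + 2) * (lam ^ (β - 2*α + 2))⁻¹ :=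
          mul_comm _ _
  have hBD : 0 ≤ B * ((β - α) * (β - α + 1))⁻¹ := mul_nonneg hB (inv_nonneg.mpr hD.le)
  calc Real.exp (-lam * t) * (t ^ (β - 2*α + 2) * B * ((β - α) * (β - α + 1))⁻¹)
      = (B * ((β - α) * (β - α + 1))⁻¹) * (t ^ (β - 2*α + 2) * Real.exp (-lam * t)) := by
        ring
    _ ≤ (B * ((β - α) * (β - α + 1))⁻¹)
          * (((β - 2*α + 2) / Real.exp 1) ^ (β - 2*α + 2) * lam ^ (2*α - β - 2)) :=
        mul_le_mul_of_nonneg_left key2 hBD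
    _ = (B / ((β - α) * (β - α + 1)))
          * ((β - 2*α + 2) / Real.exp 1) ^ (β - 2*α + 2) * lam ^ (2*α - β - 2) := by
        ring
end
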